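/- (Averaged Taylor polynomial in time, Lemma 3.3) For every k ∈ ℕ there exists a constant C > 0, depending only on k, such that for every real Banach space E, every compact interval [a,b] ⊂ ℝ with h := b−a > 0, and every k-times continuously differentiable function f : [a,b] → E, there exist coefficients c_0, …, c_k ∈ E such that, setting p(t) := Σ_{i=0}^k c_i t^i, the bound ( ∫_a^b ‖f^{(m)}(t) − p^{(m)}(t)‖_E² dt )^{1/2} ≤ C · h^{k−m} · ( ∫_a^b ‖f^{(k)}(t)‖_E² dt )^{1/2} holds for every m = 0, 1, …, k. -/

import Mathlib

/-!
Take for `p` the Taylor polynomial of `f` of degree `k - 1` at `a`, rewritten in monomials.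
The remainders `r m = f^(m) - p^(m)` then satisfy `r m' = r (m + 1)`, `r m a = 0` for `m < k`,
and `r k = f^(k)`. For a function vanishing at `a`, the fundamental theorem of calculus and
Cauchy–Schwarz give the Poincaré inequality `‖r‖_{L²(a,b)} ≤ (b - a) ‖r'‖_{L²(a,b)}`;
iterating it `k - m` times yields the bound with `C = 1`.
-/

open MeasureTheory Set

theorem sq_intervalIntegral_le_mul_intervalIntegral_sq {f : ℝ → ℝ} {a b : ℝ} (hab : a ≤ b)
    (hf : IntervalIntegrable f volume a b)
    (hf2 : IntervalIntegrable (fun x => f x ^ 2) volume a b) :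
    (∫ x in a..b, f x) ^ 2 ≤ (b - a) * ∫ x in a..b, f x ^ 2 := by
  -- the quadratic `λ ↦ ∫ (f - λ)²` is nonnegative, so its discriminant is nonpositive
  have hquad : ∀ s : ℝ, 0 ≤ (b - a) * (s * s) + (-2 * ∫ x in a..b, f x) * s
      + ∫ x in a..b, f x ^ 2 := by
    intro s
    have hexp : ∫ x in a..b, (f x - s) ^ 2
        = (b - a) * (s * s) + (-2 * ∫ x in a..b, f x) * s + ∫ x in a..b, f x ^ 2 := by
      have hlin : IntervalIntegrable (fun x => 2 * f x * s) volume a b :=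
        (hf.const_mul 2).mul_const s
      simp_rw [sub_sq]
      rw [intervalIntegral.integral_add (hf2.sub hlin) intervalIntegrable_const,
        intervalIntegral.integral_sub hf2 hlin, intervalIntegral.integral_mul_const,
        intervalIntegral.integral_const_mul, intervalIntegral.integral_const, smul_eq_mul]
      ring
    exact hexp ▸ intervalIntegral.integral_nonneg hab fun x _ => sq_nonneg _
  have hdisc := discrim_le_zero hquad
  rw [discrim] at hdisc
  linarith

variable {E : Type*} [NormedAddCommGroup E] [NormedSpace ℝ E]

theorem ContDiffOn.hasDerivAt_iteratedDerivWithin {f : ℝ → E} {s : Set ℝ} {x : ℝ} {k n : ℕ}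
    (hf : ContDiffOn ℝ k f s) (hn : n < k) (hs : UniqueDiffOn ℝ s) (hx : s ∈ nhds x) :
    HasDerivAt (iteratedDerivWithin n f s) (iteratedDerivWithin (n + 1) f s x) x := by
  rw [iteratedDerivWithin_succ]
  exact ((hf.differentiableOn_iteratedDerivWithin (mod_cast hn) hs) x
    (mem_of_mem_nhds hx)).hasDerivWithinAt.hasDerivAt hx

noncomputable def polyDeriv {k : ℕ} (x₀ : ℝ) (c : Fin (k + 1) → E) (m : ℕ) (t : ℝ) : E :=
  ∑ i : Fin (k + 1), (((i : ℕ).descFactorial m : ℝ) * (t - x₀) ^ ((i : ℕ) - m)) • c i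

theorem hasDerivAt_polyDeriv {k : ℕ} (x₀ : ℝ) (c : Fin (k + 1) → E) (m : ℕ) (t : ℝ) :
    HasDerivAt (polyDeriv x₀ c m) (polyDeriv x₀ c (m + 1) t) t := by
  refine HasDerivAt.fun_sum fun i _ => ?_
  convert (((hasDerivAt_pow ((i : ℕ) - m) (t - x₀)).comp_sub_const t x₀).const_mul
    ((i : ℕ).descFactorial m : ℝ)).smul_const (c i) using 2
  rw [Nat.descFactorial_succ, Nat.sub_sub]
  push_cast
  ring

theorem continuous_polyDeriv {k : ℕ} (x₀ : ℝ) (c : Fin (k + 1) → E) (m : ℕ) :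
    Continuous (polyDeriv x₀ c m) :=
  continuous_iff_continuousAt.2 fun t => (hasDerivAt_polyDeriv x₀ c m t).continuousAt

theorem polyDeriv_self {k : ℕ} (x₀ : ℝ) (c : Fin (k + 1) → E) (m : Fin (k + 1)) :
    polyDeriv x₀ c m x₀ = ((m : ℕ).factorial : ℝ) • c m := by
  rw [polyDeriv, Finset.sum_eq_single m]
  · simp [Nat.descFactorial_self]
  · intro i _ hi
    rcases lt_or_gt_of_ne (Fin.val_ne_of_ne hi) with h | h
    · simp [Nat.descFactorial_eq_zero_iff_lt.2 h]
    · simp [Nat.sub_ne_zero_of_lt h]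
  · simp

theorem polyDeriv_top {k : ℕ} (x₀ : ℝ) (c : Fin (k + 1) → E) (t : ℝ) :
    polyDeriv x₀ c k t = (k.factorial : ℝ) • c (Fin.last k) := by
  rw [polyDeriv, Finset.sum_eq_single (Fin.last k)]
  · simp [Nat.descFactorial_self]
  · intro i _ hi
    simp [Nat.descFactorial_eq_zero_iff_lt.2 (Fin.val_lt_last hi)]
  · simp

open Polynomial in
theorem exists_polyDeriv_zero_eq {k : ℕ} (x₀ : ℝ) (c : Fin (k + 1) → E) :
    ∃ c' : Fin (k + 1) → E, ∀ m, polyDeriv x₀ c m = polyDeriv 0 c' m := by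
  -- `c'` expands each `(t - x₀) ^ i` in monomials; the identities for `m > 0` then follow by
  -- differentiating the one for `m = 0`.
  let c' : Fin (k + 1) → E := fun j => ∑ i, ((X - C x₀) ^ (i : ℕ)).coeff j • c i
  have h0 : polyDeriv x₀ c 0 = polyDeriv 0 c' 0 := by
    funext t
    have hexpand : ∀ i : Fin (k + 1),
        (t - x₀) ^ (i : ℕ) = ∑ j : Fin (k + 1), ((X - C x₀) ^ (i : ℕ)).coeff j * t ^ (j : ℕ) := by
      intro i
      have hdeg : ((X - C x₀) ^ (i : ℕ)).natDegree < k + 1 :=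
        (natDegree_pow_le_of_le _ (natDegree_X_sub_C_le x₀)).trans_lt (by simpa using i.isLt)
      simpa using (eval_eq_sum_range' hdeg t).trans
        (Fin.sum_univ_eq_sum_range (fun j => ((X - C x₀) ^ (i : ℕ)).coeff j * t ^ j) _).symm
    simp only [polyDeriv, c', Nat.descFactorial_zero, Nat.sub_zero, Nat.cast_one, one_mul,
      sub_zero, hexpand, Finset.sum_smul, Finset.smul_sum, smul_smul]
    rw [Finset.sum_comm]
    exact Finset.sum_congr rfl fun j _ => Finset.sum_congr rfl fun i _ => by rw [mul_comm]
  refine ⟨c', fun m => ?_⟩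
  induction m with
  | zero => exact h0
  | succ m ih =>
    funext t
    exact (ih ▸ hasDerivAt_polyDeriv x₀ c m t).unique (hasDerivAt_polyDeriv 0 c' m t)

theorem exists_polyDeriv_eq (k : ℕ) (x₀ : ℝ) (v : ℕ → E) :
    ∃ c : Fin (k + 1) → E, (∀ m < k, polyDeriv 0 c m x₀ = v m) ∧ ∀ t, polyDeriv 0 c k t = 0 := by
  let c : Fin (k + 1) → E := fun i => if (i : ℕ) < k then (((i : ℕ).factorial : ℝ)⁻¹ • v i) else 0
  obtain ⟨c', hc'⟩ := exists_polyDeriv_zero_eq x₀ c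
  refine ⟨c', fun m hm => ?_, fun t => ?_⟩
  · have hself := polyDeriv_self x₀ c ⟨m, by omega⟩
    simp only [c, hm, if_true] at hself
    rw [← hc', hself, smul_smul, mul_inv_cancel₀ (by positivity), one_smul]
  · rw [← hc', polyDeriv_top]
    simp [c]

section Poincare

variable [CompleteSpace E]

theorem norm_sub_sq_le_mul_integral_norm_deriv_sq {G G' : ℝ → E} {a b : ℝ} (hab : a ≤ b)
    (hG : ContinuousOn G (Icc a b)) (hG' : ContinuousOn G' (Icc a b))
    (hderiv : ∀ x ∈ Ioo a b, HasDerivAt G (G' x) x) :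
    ‖G b - G a‖ ^ 2 ≤ (b - a) * ∫ x in a..b, ‖G' x‖ ^ 2 := by
  calc ‖G b - G a‖ ^ 2 = ‖∫ x in a..b, G' x‖ ^ 2 := by
        rw [intervalIntegral.integral_eq_sub_of_hasDerivAt_of_le hab hG hderiv
          (hG'.intervalIntegrable_of_Icc hab)]
    _ ≤ (∫ x in a..b, ‖G' x‖) ^ 2 := by
        gcongr; exact intervalIntegral.norm_integral_le_integral_norm hab
    _ ≤ (b - a) * ∫ x in a..b, ‖G' x‖ ^ 2 :=
        sq_intervalIntegral_le_mul_intervalIntegral_sq hab (hG'.norm.intervalIntegrable_of_Icc hab)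
          ((hG'.norm.pow 2).intervalIntegrable_of_Icc hab)

theorem intervalIntegral_norm_sq_le_of_hasDerivAt_of_eq_zero {G G' : ℝ → E} {a b : ℝ}
    (hab : a ≤ b) (hG : ContinuousOn G (Icc a b)) (hG' : ContinuousOn G' (Icc a b))
    (hderiv : ∀ x ∈ Ioo a b, HasDerivAt G (G' x) x) (hGa : G a = 0) :
    ∫ x in a..b, ‖G x‖ ^ 2 ≤ (b - a) ^ 2 * ∫ x in a..b, ‖G' x‖ ^ 2 := by
  have hG'sq : IntervalIntegrable (fun x => ‖G' x‖ ^ 2) volume a b :=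
    (hG'.norm.pow 2).intervalIntegrable_of_Icc hab
  have hpointwise : ∀ t ∈ Icc a b, ‖G t‖ ^ 2 ≤ (b - a) * ∫ x in a..b, ‖G' x‖ ^ 2 := by
    intro t ht
    calc ‖G t‖ ^ 2 = ‖G t - G a‖ ^ 2 := by rw [hGa, sub_zero]
      _ ≤ (t - a) * ∫ x in a..t, ‖G' x‖ ^ 2 :=
          norm_sub_sq_le_mul_integral_norm_deriv_sq ht.1 (hG.mono (Icc_subset_Icc_right ht.2))
            (hG'.mono (Icc_subset_Icc_right ht.2))
            fun x hx => hderiv x ⟨hx.1, hx.2.trans_le ht.2⟩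
      _ ≤ (b - a) * ∫ x in a..b, ‖G' x‖ ^ 2 := by
          refine mul_le_mul (by linarith [ht.2]) ?_
            (intervalIntegral.integral_nonneg ht.1 fun _ _ => sq_nonneg _) (sub_nonneg.2 hab)
          exact intervalIntegral.integral_mono_interval le_rfl ht.1 ht.2
            (Filter.Eventually.of_forall fun _ => sq_nonneg _) hG'sq
  calc ∫ x in a..b, ‖G x‖ ^ 2 ≤ ∫ _ in a..b, (b - a) * ∫ x in a..b, ‖G' x‖ ^ 2 :=
        intervalIntegral.integral_mono_on hab ((hG.norm.pow 2).intervalIntegrable_of_Icc hab)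
          intervalIntegrable_const hpointwise
    _ = (b - a) ^ 2 * ∫ x in a..b, ‖G' x‖ ^ 2 := by
        rw [intervalIntegral.integral_const, smul_eq_mul]; ring

theorem intervalIntegral_norm_sq_le_of_iterated_hasDerivAt {G : ℕ → ℝ → E} {a b : ℝ} {k : ℕ}
    (hab : a ≤ b) (hcont : ∀ n ≤ k, ContinuousOn (G n) (Icc a b))
    (hderiv : ∀ n < k, ∀ x ∈ Ioo a b, HasDerivAt (G n) (G (n + 1) x) x)
    (hzero : ∀ n < k, G n a = 0) {m : ℕ} (hm : m ≤ k) :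
    ∫ x in a..b, ‖G m x‖ ^ 2 ≤ ((b - a) ^ 2) ^ (k - m) * ∫ x in a..b, ‖G k x‖ ^ 2 := by
  induction hm using Nat.decreasingInduction with
  | self => simp
  | of_succ m hmk ih =>
    calc ∫ x in a..b, ‖G m x‖ ^ 2 ≤ (b - a) ^ 2 * ∫ x in a..b, ‖G (m + 1) x‖ ^ 2 :=
          intervalIntegral_norm_sq_le_of_hasDerivAt_of_eq_zero hab (hcont m hmk.le)
            (hcont (m + 1) hmk) (hderiv m hmk) (hzero m hmk)
      _ ≤ (b - a) ^ 2 * (((b - a) ^ 2) ^ (k - (m + 1)) * ∫ x in a..b, ‖G k x‖ ^ 2) := by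
          gcongr
      _ = ((b - a) ^ 2) ^ (k - m) * ∫ x in a..b, ‖G k x‖ ^ 2 := by
          rw [← mul_assoc, ← pow_succ', show k - (m + 1) + 1 = k - m by omega]

theorem intervalIntegral_norm_sq_rpow_half_le_of_iterated_hasDerivAt {G : ℕ → ℝ → E} {a b : ℝ}
    {k : ℕ} (hab : a ≤ b) (hcont : ∀ n ≤ k, ContinuousOn (G n) (Icc a b))
    (hderiv : ∀ n < k, ∀ x ∈ Ioo a b, HasDerivAt (G n) (G (n + 1) x) x)
    (hzero : ∀ n < k, G n a = 0) {m : ℕ} (hm : m ≤ k) :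
    (∫ x in a..b, ‖G m x‖ ^ 2) ^ (1 / 2 : ℝ)
      ≤ (b - a) ^ (k - m) * (∫ x in a..b, ‖G k x‖ ^ 2) ^ (1 / 2 : ℝ) := by
  have h := intervalIntegral_norm_sq_le_of_iterated_hasDerivAt hab hcont hderiv hzero hm
  rw [← pow_mul, mul_comm 2, pow_mul] at h
  rw [← Real.sqrt_eq_rpow, ← Real.sqrt_eq_rpow,
    ← Real.sqrt_sq (pow_nonneg (sub_nonneg.2 hab) (k - m)), ← Real.sqrt_mul (sq_nonneg _)]
  exact Real.sqrt_le_sqrt h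

end Poincare

theorem averaged_taylor_in_time.{u} (k : ℕ) :
    ∃ C : ℝ, 0 < C ∧
      ∀ (E : Type u) (_ : NormedAddCommGroup E), ∀ (_ : NormedSpace ℝ E) (_ : CompleteSpace E),
      ∀ (a b : ℝ), a < b →
      ∀ f : ℝ → E, ContDiffOn ℝ k f (Set.Icc a b) →
        ∃ c : Fin (k + 1) → E,
          ∀ m ≤ k,
            (∫ t in a..b,
                ‖iteratedDerivWithin m f (Set.Icc a b) t -
                  ∑ i : Fin (k + 1),
                    ((Nat.descFactorial (i : ℕ) m : ℝ) * t ^ ((i : ℕ) - m)) • c i‖ ^ 2)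
              ^ (1/2 : ℝ) ≤
            C * (b - a) ^ (k - m) *
              (∫ t in a..b, ‖iteratedDerivWithin k f (Set.Icc a b) t‖ ^ 2) ^ (1/2 : ℝ) := by
  refine ⟨1, one_pos, fun E _ _ _ a b hab f hf => ?_⟩
  have hs : UniqueDiffOn ℝ (Icc a b) := uniqueDiffOn_Icc hab
  obtain ⟨c, hc_at, hc_top⟩ := exists_polyDeriv_eq k a fun n => iteratedDerivWithin n f (Icc a b) a
  refine ⟨c, fun m hm => ?_⟩
  have key := intervalIntegral_norm_sq_rpow_half_le_of_iterated_hasDerivAt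
    (G := fun n t => iteratedDerivWithin n f (Icc a b) t - polyDeriv 0 c n t) hab.le
    (fun n hn => (hf.continuousOn_iteratedDerivWithin (mod_cast hn) hs).sub
      (continuous_polyDeriv 0 c n).continuousOn)
    (fun n hn x hx => (hf.hasDerivAt_iteratedDerivWithin hn hs (Icc_mem_nhds hx.1 hx.2)).sub
      (hasDerivAt_polyDeriv 0 c n x))
    (fun n hn => sub_eq_zero.2 (hc_at n hn).symm) hm
  simp only [hc_top, sub_zero] at key
  simpa [polyDeriv] using key
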